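/- arXiv:2304.07657 — 3 statements merged into one kernel-verified Lean document; each statement's English description precedes it below -/
import Mathlib

section
/- There are exactly 41 vacillating tableaux of length 5 from the partition (3) to the partition (3); equivalently, m^{(3)}_{(3)}(5) = S(5,1) + S(5,2) + S(5,3) = 1 + 15 + 25 = 41. -/
open YoungDiagram

/-- `ν` is obtained from `μ` by adding exactly one cell. -/
def AddCell (μ ν : YoungDiagram) : Prop := μ ≤ ν ∧ ν.card = μ.card + 1

/-- Vacillating tableaux of length `k` from `lam` to `mu`: sequences
`lam = λ⁰ ⊃ λ¹ ⊂ λ² ⊃ ⋯ ⊂ λ^{2k} = mu` with consecutive terms differing by one cell,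
encoded as functions `ℕ → YoungDiagram` that are constantly `mu` from index `2k` on. -/
def vacTabs (k : ℕ) (lam mu : YoungDiagram) : Set (ℕ → YoungDiagram) :=
  {f | f 0 = lam ∧ (∀ j, 2 * k ≤ j → f j = mu) ∧
    ∀ i < k, AddCell (f (2 * i + 1)) (f (2 * i)) ∧ AddCell (f (2 * i + 1)) (f (2 * i + 2))}

/-- `m^lam_mu(k)`: the number of vacillating tableaux of length `k` from `lam` to `mu`. -/
noncomputable def mVac (lam mu : YoungDiagram) (k : ℕ) : ℕ := (vacTabs k lam mu).ncard

/-- Standard Young tableaux of shape `lam`, as saturated chains `∅ = ν⁰ ⊂ ν¹ ⊂ ⋯ ⊂ νⁿ = lam`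
adding one cell at a time (encoded as functions constantly `lam` from index `lam.card` on). -/
def sytChains (lam : YoungDiagram) : Set (ℕ → YoungDiagram) :=
  {g | g 0 = ⊥ ∧ (∀ j, lam.card ≤ j → g j = lam) ∧
    ∀ i < lam.card, AddCell (g i) (g (i + 1))}

/-- `f^lam`: the number of standard Young tableaux of shape `lam`. -/
noncomputable def fSYT (lam : YoungDiagram) : ℕ := (sytChains lam).ncard

/-- The one-row partition `(n)`. -/
def rowD (n : ℕ) : YoungDiagram := ofRowLens [n] (List.Pairwise.sortedGE (List.pairwise_singleton _ n))

/-- The one-column partition `(1ⁿ)`. -/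
def colD (n : ℕ) : YoungDiagram :=
  ofRowLens (List.replicate n 1) (List.Pairwise.sortedGE (List.pairwise_replicate.mpr (Or.inr (le_refl 1))))

/-- The hook partition `(n-1,1)` (for `n ≥ 2`). -/
def hookD (n : ℕ) : YoungDiagram := rowD (n - 1) ⊔ colD 2

/-- Stirling numbers of the second kind: the number of set partitions of a
`k`-element set into exactly `l` nonempty blocks. -/
noncomputable def stirling (k l : ℕ) : ℕ :=
  {P : Finpartition (Finset.univ : Finset (Fin k)) | P.parts.card = l}.ncard

/-- Bell numbers: the number of set partitions of a `k`-element set. -/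
noncomputable def bell (k : ℕ) : ℕ :=
  Nat.card (Finpartition (Finset.univ : Finset (Fin k)))

/-
A vacillating tableau from `(3)` to `(3)` alternates between diagrams with two and with three
cells, and there are only two, resp. three, of those. Cutting off the first two steps therefore
gives a transfer-matrix recursion `a' = a + b`, `b' = a + 2b + c`, `c' = b + c` for the numbers
of tableaux of length `k` from `(3)`, `(2,1)`, `(1,1,1)` to `(3)`; five steps from `(1, 0, 0)`
reach `a = 41`.

A set partition of a finite linear order is determined by the map sending each point to the least
element of its block. These maps are exactly the idempotent maps with `g x ≤ x`, and the number of
blocks is the size of the image, so `S(5, l)` is a finite count of self-maps of `Fin 5`.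
-/

instance : DecidableEq YoungDiagram := fun _ _ => decidable_of_iff _ YoungDiagram.ext_iff.symm

instance (μ ν : YoungDiagram) : Decidable (AddCell μ ν) :=
  decidable_of_iff (μ.cells ⊆ ν.cells ∧ ν.card = μ.card + 1)
    (by rw [AddCell, cells_subset_iff])

namespace YoungDiagram

open Finset

theorem cells_subset_range_card_product (μ : YoungDiagram) :
    μ.cells ⊆ range μ.card ×ˢ range μ.card := by
  rintro ⟨i, j⟩ hij
  have hrow : #(range (i + 1)) ≤ μ.card :=
    card_le_card_of_injOn (fun k => (k, j))
      (fun k hk => μ.up_left_mem (Nat.lt_succ_iff.mp (mem_range.mp hk)) le_rfl hij)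
      (fun a _ b _ hab => (Prod.mk.inj hab).1)
  have hcol : #(range (j + 1)) ≤ μ.card :=
    card_le_card_of_injOn (fun k => (i, k))
      (fun k hk => μ.up_left_mem le_rfl (Nat.lt_succ_iff.mp (mem_range.mp hk)) hij)
      (fun a _ b _ hab => (Prod.mk.inj hab).2)
  simp only [card_range] at hrow hcol
  simp only [mem_product, mem_range]
  omega

def cellSetsOfCard (n : ℕ) : Finset (Finset (ℕ × ℕ)) :=
  (range n ×ˢ range n).powerset.filter fun t =>
    #t = n ∧ ∀ c ∈ t, ∀ c' ∈ range n ×ˢ range n, c' ≤ c → c' ∈ t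

theorem cells_mem_cellSetsOfCard (μ : YoungDiagram) : μ.cells ∈ cellSetsOfCard μ.card :=
  mem_filter.mpr ⟨mem_powerset.mpr μ.cells_subset_range_card_product,
    rfl, fun _ hc _ _ hle => μ.isLowerSet hle hc⟩

theorem eq_rowD_or_eq_colD_of_card_eq_two {μ : YoungDiagram} (h : μ.card = 2) :
    μ = rowD 2 ∨ μ = colD 2 := by
  have hμ := μ.cells_mem_cellSetsOfCard
  rw [h, show cellSetsOfCard 2 = {(rowD 2).cells, (colD 2).cells} by decide] at hμ
  simpa [← YoungDiagram.ext_iff] using hμ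

set_option maxRecDepth 2000 in
theorem eq_rowD_or_eq_hookD_or_eq_colD_of_card_eq_three {μ : YoungDiagram} (h : μ.card = 3) :
    μ = rowD 3 ∨ μ = hookD 3 ∨ μ = colD 3 := by
  have hμ := μ.cells_mem_cellSetsOfCard
  rw [h, show cellSetsOfCard 3 = {(rowD 3).cells, (hookD 3).cells, (colD 3).cells} by decide]
    at hμ
  simpa [← YoungDiagram.ext_iff] using hμ

end YoungDiagram

def prependTwo {α : Type*} (a b : α) (g : ℕ → α) : ℕ → α
  | 0 => a
  | 1 => b
  | n + 2 => g n

theorem prependTwo_injective {α : Type*} (a b : α) : Function.Injective (prependTwo a b) :=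
  fun _ _ h => funext fun n => congrFun h (n + 2)

theorem vacTabs_zero (lam mu : YoungDiagram) :
    vacTabs 0 lam mu = if lam = mu then {fun _ => mu} else ∅ := by
  ext f
  simp only [vacTabs, Nat.mul_zero, zero_le, forall_const, Nat.not_lt_zero, false_imp_iff,
    and_true, Set.mem_ofPred_eq]
  split_ifs with h
  · subst h
    simp only [Set.mem_singleton_iff, funext_iff]
    exact ⟨And.right, fun hf => ⟨hf 0, hf⟩⟩
  · simp only [Set.mem_empty_iff_false, iff_false, not_and]
    rintro rfl hf
    exact h (hf 0)

theorem vacTabs_succ (k : ℕ) (lam mu : YoungDiagram) :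
    vacTabs (k + 1) lam mu =
      ⋃ p ∈ {p : YoungDiagram × YoungDiagram | AddCell p.1 lam ∧ AddCell p.1 p.2},
        prependTwo lam p.1 '' vacTabs k p.2 mu := by
  ext f
  simp only [Set.mem_iUnion, Set.mem_image, Set.mem_ofPred_eq, vacTabs, exists_prop, Prod.exists]
  constructor
  · rintro ⟨h0, hend, hstep⟩
    refine ⟨f 1, f 2, by simpa [h0] using hstep 0 k.succ_pos, fun n => f (n + 2),
      ⟨rfl, fun j hj => hend (j + 2) (by omega), fun i hi => ?_⟩, ?_⟩
    · simpa [Nat.mul_succ, add_assoc] using hstep (i + 1) (by omega)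
    · funext n
      rcases n with _ | _ | n
      · exact h0.symm
      · rfl
      · rfl
  · rintro ⟨ν, ρ, ⟨hν, hρ⟩, g, ⟨hg0, hgend, hgstep⟩, rfl⟩
    refine ⟨rfl, fun j hj => ?_, fun i hi => ?_⟩
    · obtain ⟨j, rfl⟩ : ∃ m, j = m + 2 := ⟨j - 2, by omega⟩
      exact hgend j (by omega)
    · rcases i with _ | i
      · simpa [prependTwo, hg0] using And.intro hν hρ
      · simpa [Nat.mul_succ, add_assoc, prependTwo] using hgstep i (by omega)

theorem encard_vacTabs_succ {k : ℕ} {lam mu : YoungDiagram}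
    {s : Finset (YoungDiagram × YoungDiagram)}
    (hs : ∀ p, p ∈ s ↔ AddCell p.1 lam ∧ AddCell p.1 p.2) :
    (vacTabs (k + 1) lam mu).encard = ∑ p ∈ s, (vacTabs k p.2 mu).encard := by
  have hset : {p : YoungDiagram × YoungDiagram | AddCell p.1 lam ∧ AddCell p.1 p.2} = ↑s := by
    ext p; exact (hs p).symm
  have hdisj : (s : Set (YoungDiagram × YoungDiagram)).PairwiseDisjoint
      fun p => prependTwo lam p.1 '' vacTabs k p.2 mu := by
    rintro ⟨ν, ρ⟩ - ⟨ν', ρ'⟩ - hne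
    refine Set.disjoint_left.mpr ?_
    rintro _ ⟨g, hg, rfl⟩ ⟨g', hg', heq⟩
    have h1 : ν' = ν := congrFun heq 1
    have h2 : ρ' = ρ := hg'.1.symm.trans ((congrFun heq 2).trans hg.1)
    exact hne (by rw [h1, h2])
  rw [vacTabs_succ, hset, s.finite_toSet.encard_biUnion hdisj, finsum_mem_coe_finset]
  exact Finset.sum_congr rfl fun p _ => (prependTwo_injective _ _).encard_image _

open Finset in
theorem encard_vacTabs_succ_of_card_eq_three {k : ℕ} {lam mu : YoungDiagram}
    (hlam : lam.card = 3) :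
    (vacTabs (k + 1) lam mu).encard =
      ∑ p ∈ (({rowD 2, colD 2} : Finset YoungDiagram) ×ˢ {rowD 3, hookD 3, colD 3}).filter
        (fun p => AddCell p.1 lam ∧ AddCell p.1 p.2), (vacTabs k p.2 mu).encard := by
  refine encard_vacTabs_succ fun ⟨ν, ρ⟩ => ?_
  simp only [mem_filter, mem_product, mem_insert, mem_singleton, and_iff_right_iff_imp]
  rintro ⟨hν, hρ⟩
  have hν2 : ν.card = 2 := by have := hν.2; omega
  exact ⟨eq_rowD_or_eq_colD_of_card_eq_two hν2,
    eq_rowD_or_eq_hookD_or_eq_colD_of_card_eq_three (by rw [hρ.2, hν2])⟩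

theorem encard_vacTabs_rowD_three_succ (k : ℕ) (mu : YoungDiagram) :
    (vacTabs (k + 1) (rowD 3) mu).encard =
      (vacTabs k (rowD 3) mu).encard + (vacTabs k (hookD 3) mu).encard := by
  rw [encard_vacTabs_succ_of_card_eq_three (by decide)]
  simp +decide [Finset.sum_filter, Finset.sum_product, Finset.sum_insert]

theorem encard_vacTabs_hookD_three_succ (k : ℕ) (mu : YoungDiagram) :
    (vacTabs (k + 1) (hookD 3) mu).encard =
      (vacTabs k (rowD 3) mu).encard + 2 * (vacTabs k (hookD 3) mu).encard +
        (vacTabs k (colD 3) mu).encard := by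
  rw [encard_vacTabs_succ_of_card_eq_three (by decide)]
  simp +decide [Finset.sum_filter, Finset.sum_product, Finset.sum_insert, two_mul, add_assoc]

theorem encard_vacTabs_colD_three_succ (k : ℕ) (mu : YoungDiagram) :
    (vacTabs (k + 1) (colD 3) mu).encard =
      (vacTabs k (hookD 3) mu).encard + (vacTabs k (colD 3) mu).encard := by
  rw [encard_vacTabs_succ_of_card_eq_three (by decide)]
  simp +decide [Finset.sum_filter, Finset.sum_product, Finset.sum_insert]

theorem mVac_rowD_three_rowD_three_five : mVac (rowD 3) (rowD 3) 5 = 41 := by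
  have h : (vacTabs 5 (rowD 3) (rowD 3)).encard = 41 := by
    simp +decide only [encard_vacTabs_rowD_three_succ,
      encard_vacTabs_hookD_three_succ, encard_vacTabs_colD_three_succ, vacTabs_zero, if_true,
      if_false, Set.encard_singleton, Set.encard_empty]
  rw [mVac, Set.ncard_def, h]
  rfl

namespace Finpartition

open Finset

variable {α : Type*} [Fintype α] [LinearOrder α]

def minRep (P : Finpartition (univ : Finset α)) (a : α) : α :=
  (P.part a).min' ⟨a, P.mem_part (mem_univ a)⟩

variable (P : Finpartition (univ : Finset α))

theorem minRep_mem_part (a : α) : P.minRep a ∈ P.part a := min'_mem _ _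

theorem minRep_le (a : α) : P.minRep a ≤ a := min'_le _ _ (P.mem_part (mem_univ a))

theorem part_minRep (a : α) : P.part (P.minRep a) = P.part a :=
  P.part_eq_of_mem (P.part_mem.2 (mem_univ a)) (P.minRep_mem_part a)

theorem minRep_minRep (a : α) : P.minRep (P.minRep a) = P.minRep a := by
  have h := P.part_minRep a
  unfold minRep at h ⊢
  simp only [h]

theorem minRep_eq_minRep_iff {a b : α} : P.minRep a = P.minRep b ↔ P.part a = P.part b := by
  refine ⟨fun h => ?_, fun h => by simp only [minRep, h]⟩
  rw [← P.part_minRep a, ← P.part_minRep b, h]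

theorem card_parts_eq_card_image_minRep : #P.parts = #(univ.image P.minRep) := by
  refine card_bij (fun p hp => p.min' (P.nonempty_of_mem_parts hp)) (fun p hp => ?_)
    (fun p hp q hq h => P.eq_of_mem_parts hp hq (min'_mem _ _) (by rw [h]; exact min'_mem _ _))
    (fun b hb => ?_)
  · obtain ⟨a, -, rfl⟩ := P.part_surjOn hp
    exact mem_image_of_mem _ (mem_univ a)
  · obtain ⟨a, -, rfl⟩ := mem_image.mp hb
    exact ⟨P.part a, P.part_mem.2 (mem_univ a), rfl⟩

theorem minRep_injective : Function.Injective (minRep (α := α)) := by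
  intro P Q h
  have hpart : ∀ a, P.part a = Q.part a := fun a => by
    ext b
    rw [P.mem_part_iff_part_eq_part (mem_univ b) (mem_univ a),
      Q.mem_part_iff_part_eq_part (mem_univ b) (mem_univ a),
      ← minRep_eq_minRep_iff, ← minRep_eq_minRep_iff, h]
  ext p
  constructor
  · rintro hp
    obtain ⟨a, -, rfl⟩ := P.part_surjOn hp
    exact hpart a ▸ Q.part_mem.2 (mem_univ a)
  · rintro hp
    obtain ⟨a, -, rfl⟩ := Q.part_surjOn hp
    exact (hpart a).symm ▸ P.part_mem.2 (mem_univ a)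

theorem minRep_ofSetoid_ker {g : α → α} [DecidableRel (Setoid.ker g)]
    (hg : ∀ x, g (g x) = g x ∧ g x ≤ x) :
    (ofSetoid (Setoid.ker g)).minRep = g := by
  funext a
  apply le_antisymm
  · exact min'_le _ _ (mem_part_ofSetoid_iff_rel.mpr (hg a).1.symm)
  · refine le_min' _ _ _ fun b hb => ?_
    rw [(mem_part_ofSetoid_iff_rel.mp hb : g a = g b)]
    exact (hg b).2

theorem exists_minRep_eq {g : α → α} (hg : ∀ x, g (g x) = g x ∧ g x ≤ x) :
    ∃ P : Finpartition (univ : Finset α), P.minRep = g := by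
  classical
  exact ⟨_, minRep_ofSetoid_ker hg⟩

end Finpartition

open Finset in
theorem stirling_eq_card_filter (n l : ℕ) :
    stirling n l =
      #{g : Fin n → Fin n | (∀ x, g (g x) = g x ∧ g x ≤ x) ∧ #(univ.image g) = l} := by
  rw [stirling, ← Set.ncard_image_of_injective _ Finpartition.minRep_injective,
    ← Set.ncard_coe_finset]
  congr 1
  ext g
  simp only [Set.mem_image, Set.mem_ofPred_eq, coe_filter, mem_univ, true_and]
  constructor
  · rintro ⟨P, hP, rfl⟩
    exact ⟨fun x => ⟨P.minRep_minRep x, P.minRep_le x⟩,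
      P.card_parts_eq_card_image_minRep ▸ hP⟩
  · rintro ⟨hg, hcard⟩
    obtain ⟨P, rfl⟩ := Finpartition.exists_minRep_eq hg
    exact ⟨P, P.card_parts_eq_card_image_minRep.trans hcard, rfl⟩

set_option maxRecDepth 8000 in
theorem stirling_five_one : stirling 5 1 = 1 := by rw [stirling_eq_card_filter]; decide
set_option maxRecDepth 8000 in
theorem stirling_five_two : stirling 5 2 = 15 := by rw [stirling_eq_card_filter]; decide
set_option maxRecDepth 8000 in
theorem stirling_five_three : stirling 5 3 = 25 := by rw [stirling_eq_card_filter]; decide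

theorem stmt8 :
    mVac (rowD 3) (rowD 3) 5 = 41 ∧
      stirling 5 1 + stirling 5 2 + stirling 5 3 = 41 ∧
        stirling 5 1 = 1 ∧ stirling 5 2 = 15 ∧ stirling 5 3 = 25 := by
  refine ⟨mVac_rowD_three_rowD_three_five, ?_, stirling_five_one, stirling_five_two,
    stirling_five_three⟩
  rw [stirling_five_one, stirling_five_two, stirling_five_three]
end

section
/- For every positive integer n and nonnegative integer k, the number of pairs (T, V), where T is a standard Young tableau of some shape λ with |λ| = n and V is a vacillating tableau of length k from λ to (n), equals the number of functions from a k-element set to an n-element set. -/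
open YoungDiagram

/-! Write `G_k(μ)` for the pairs `(T, V)` with `V` a vacillating tableau of length `k` ending at
`μ`. Cutting off the last down-up step `λ^{2k} ⊃ ρ ⊂ μ` of `V` gives
`|G_{k+1}(μ)| = ∑_{ρ ⋖ μ} ∑_{l ⋗ ρ} |G_k(l)|`, while `|G_0(μ)| = f^μ`. Hence `|G_k(μ)| = |μ|^k f^μ`
by induction on `k`, using the branching rule `f^μ = ∑_{ρ ⋖ μ} f^ρ` and the identity
`∑_{l ⋗ ρ} f^l = (|ρ| + 1) f^ρ`. The latter follows by induction on `|ρ|` from the branching rule,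
from the fact that every diagram has one more addable than removable cell, and from the fact that
two distinct diagrams of the same size have a common cover iff they have a common cocover.
Finally `f^{(n)} = 1`. -/

namespace YoungDiagram

theorem exists_cells_eq_insert {μ ν : YoungDiagram} (h : AddCell μ ν) :
    ∃ c ∉ μ, ν.cells = insert c μ.cells := by
  obtain ⟨c, hc, hins⟩ := Finset.exists_eq_insert_iff.2 ⟨cells_subset_iff.2 h.1, h.2.symm⟩
  exact ⟨c, by simpa using hc, hins.symm⟩

def IsRemovableRow (μ : YoungDiagram) (i : ℕ) : Prop := μ.rowLen (i + 1) < μ.rowLen i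

/-- A cell can be appended to row `i + 1` exactly when row `i` is strictly longer, that is,
when row `i` ends in a removable cell. -/
def IsAddableRow (μ : YoungDiagram) : ℕ → Prop
  | 0 => True
  | i + 1 => μ.IsRemovableRow i

theorem rowEnd_notMem (μ : YoungDiagram) (i : ℕ) : (i, μ.rowLen i) ∉ μ := by
  simp [mem_iff_lt_rowLen]

def addCorner (μ : YoungDiagram) (i : ℕ) (h : μ.IsAddableRow i) : YoungDiagram where
  cells := insert (i, μ.rowLen i) μ.cells
  isLowerSet := by
    rintro a ⟨b₁, b₂⟩ hba ha
    simp only [Finset.coe_insert, Set.mem_insert_iff, Finset.mem_coe, mem_cells,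
      Prod.mk.injEq] at ha ⊢
    rcases ha with rfl | ha
    · obtain ⟨hb₁, hb₂⟩ : b₁ ≤ i ∧ b₂ ≤ μ.rowLen i := hba
      rcases hb₁.eq_or_lt with rfl | hlt
      · rcases hb₂.eq_or_lt with rfl | hlt₂
        · exact Or.inl ⟨rfl, rfl⟩
        · exact Or.inr (mem_iff_lt_rowLen.2 hlt₂)
      · cases i with
        | zero => cases Nat.not_lt_zero _ hlt
        | succ i =>
          refine Or.inr (mem_iff_lt_rowLen.2 ?_)
          calc b₂ ≤ μ.rowLen (i + 1) := hb₂
            _ < μ.rowLen i := h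
            _ ≤ μ.rowLen b₁ := μ.rowLen_anti _ _ (Nat.le_of_lt_succ hlt)
    · exact Or.inr (μ.isLowerSet hba ha)

theorem mem_addCorner {μ : YoungDiagram} {i : ℕ} {h : μ.IsAddableRow i} {c : ℕ × ℕ} :
    c ∈ μ.addCorner i h ↔ c = (i, μ.rowLen i) ∨ c ∈ μ := by
  rw [← mem_cells]
  exact Finset.mem_insert.trans (or_congr Iff.rfl (mem_cells c))

theorem addCell_addCorner (μ : YoungDiagram) {i : ℕ} (h : μ.IsAddableRow i) :
    AddCell μ (μ.addCorner i h) :=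
  ⟨cells_subset_iff.1 (Finset.subset_insert _ _),
    Finset.card_insert_of_notMem (by simpa using μ.rowEnd_notMem i)⟩

theorem addCell_iff_exists_addCorner {μ ν : YoungDiagram} :
    AddCell μ ν ↔ ∃ i h, ν = μ.addCorner i h := by
  refine ⟨fun hν => ?_, fun ⟨i, h, hν⟩ => hν ▸ μ.addCell_addCorner h⟩
  obtain ⟨⟨i, j⟩, hc, hcells⟩ := exists_cells_eq_insert hν
  have hmem : ∀ x ∈ ν, x ≠ (i, j) → x ∈ μ := fun x hx hne => by
    rw [← mem_cells, hcells, Finset.mem_insert] at hx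
    simpa [hne] using hx
  have hcν : (i, j) ∈ ν := by rw [← mem_cells, hcells]; exact Finset.mem_insert_self _ _
  have hj : j = μ.rowLen i := by
    refine le_antisymm (not_lt.1 fun hlt => μ.rowEnd_notMem i ?_)
      (not_lt.1 (hc ∘ mem_iff_lt_rowLen.2))
    exact hmem _ (ν.up_left_mem le_rfl hlt.le hcν) (by simp [hlt.ne])
  subst hj
  have hadd : μ.IsAddableRow i := by
    cases i with
    | zero => trivial
    | succ i =>
      refine mem_iff_lt_rowLen.1 (hmem _ (ν.up_left_mem (Nat.le_succ i) le_rfl hcν) ?_)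
      simp
  exact ⟨i, hadd, YoungDiagram.ext hcells⟩

theorem addCorner_injective {μ : YoungDiagram} {i i' : ℕ} {h : μ.IsAddableRow i}
    {h' : μ.IsAddableRow i'} (he : μ.addCorner i h = μ.addCorner i' h') : i = i' := by
  have : (i, μ.rowLen i) ∈ μ.addCorner i' h' := he ▸ mem_addCorner.2 (Or.inl rfl)
  rcases mem_addCorner.1 this with hc | hc
  · exact (Prod.ext_iff.1 hc).1
  · exact absurd hc (μ.rowEnd_notMem i)

theorem IsRemovableRow.rowLen_pos {μ : YoungDiagram} {i : ℕ} (h : μ.IsRemovableRow i) :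
    0 < μ.rowLen i :=
  Nat.zero_lt_of_lt h

def removeCorner (μ : YoungDiagram) (i : ℕ) (h : μ.IsRemovableRow i) : YoungDiagram where
  cells := μ.cells.erase (i, μ.rowLen i - 1)
  isLowerSet := by
    rintro ⟨a₁, a₂⟩ b hba ha
    simp only [Finset.coe_erase, Set.mem_sdiff, Finset.mem_coe, mem_cells,
      Set.mem_singleton_iff] at ha ⊢
    refine ⟨μ.isLowerSet hba ha.1, ?_⟩
    rintro rfl
    obtain ⟨hi, hj⟩ : i ≤ a₁ ∧ μ.rowLen i - 1 ≤ a₂ := hba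
    have ha₂ : a₂ < μ.rowLen a₁ := mem_iff_lt_rowLen.1 ha.1
    have hrow : μ.rowLen a₁ ≤ μ.rowLen i := μ.rowLen_anti _ _ hi
    rcases hi.eq_or_lt with rfl | hlt
    · exact ha.2 (Prod.ext rfl (by simp only; omega))
    · have := μ.rowLen_anti (i + 1) a₁ hlt
      have : μ.rowLen (i + 1) < μ.rowLen i := h
      omega

theorem mem_removeCorner {μ : YoungDiagram} {i : ℕ} {h : μ.IsRemovableRow i} {c : ℕ × ℕ} :
    c ∈ μ.removeCorner i h ↔ c ≠ (i, μ.rowLen i - 1) ∧ c ∈ μ := by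
  rw [← mem_cells]
  exact Finset.mem_erase.trans (and_congr Iff.rfl (mem_cells c))

theorem IsRemovableRow.corner_mem {μ : YoungDiagram} {i : ℕ} (h : μ.IsRemovableRow i) :
    (i, μ.rowLen i - 1) ∈ μ :=
  mem_iff_lt_rowLen.2 (Nat.sub_one_lt_of_lt h.rowLen_pos)

theorem addCell_removeCorner (μ : YoungDiagram) {i : ℕ} (h : μ.IsRemovableRow i) :
    AddCell (μ.removeCorner i h) μ :=
  ⟨cells_subset_iff.1 (Finset.erase_subset _ _),
    (Finset.card_erase_add_one ((mem_cells _).2 h.corner_mem)).symm⟩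

theorem addCell_iff_exists_removeCorner {ρ μ : YoungDiagram} :
    AddCell ρ μ ↔ ∃ i h, ρ = μ.removeCorner i h := by
  refine ⟨fun hρ => ?_, fun ⟨i, h, hρ⟩ => hρ ▸ μ.addCell_removeCorner h⟩
  obtain ⟨⟨i, j⟩, hc, hcells⟩ := exists_cells_eq_insert hρ
  have hcμ : (i, j) ∈ μ := by rw [← mem_cells, hcells]; exact Finset.mem_insert_self _ _
  have hmax : ∀ x ∈ μ, (i, j) ≤ x → x = (i, j) := fun x hx hle => by
    by_contra hne
    rw [← mem_cells, hcells, Finset.mem_insert] at hx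
    exact hc (ρ.isLowerSet hle (by simpa [hne] using hx))
  have hj : j = μ.rowLen i - 1 := by
    have h₁ := mem_iff_lt_rowLen.1 hcμ
    have h₂ : (i, j + 1) ∉ μ := fun hx => by simpa using hmax _ hx (by simp [Prod.le_def])
    rw [mem_iff_lt_rowLen] at h₂
    omega
  subst hj
  have hrem : μ.IsRemovableRow i := by
    have : (i + 1, μ.rowLen i - 1) ∉ μ := fun hx => by
      simpa using hmax _ hx (by simp [Prod.le_def])
    have hpos := mem_iff_lt_rowLen.1 hcμ
    rw [mem_iff_lt_rowLen] at this
    exact lt_of_not_ge fun hle => this (by omega)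
  refine ⟨i, hrem, YoungDiagram.ext ?_⟩
  show ρ.cells = μ.cells.erase _
  rw [hcells, Finset.erase_insert (by simpa using hc)]

theorem removeCorner_injective {μ : YoungDiagram} {i i' : ℕ} {h : μ.IsRemovableRow i}
    {h' : μ.IsRemovableRow i'} (he : μ.removeCorner i h = μ.removeCorner i' h') : i = i' := by
  by_contra hne
  have : (i, μ.rowLen i - 1) ∈ μ.removeCorner i' h' :=
    mem_removeCorner.2 ⟨fun hc => hne (Prod.ext_iff.1 hc).1, h.corner_mem⟩
  exact (mem_removeCorner.1 (he ▸ this)).1 rfl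

noncomputable def addableRowsEquiv (μ : YoungDiagram) :
    {i // μ.IsAddableRow i} ≃ {ν // AddCell μ ν} :=
  Equiv.ofBijective (fun i => ⟨μ.addCorner i.1 i.2, μ.addCell_addCorner i.2⟩)
    ⟨fun ⟨_, h⟩ ⟨_, h'⟩ he =>
      Subtype.ext (addCorner_injective (h := h) (h' := h') (congrArg Subtype.val he)),
      fun ⟨_, hν⟩ => by
        obtain ⟨i, h, rfl⟩ := addCell_iff_exists_addCorner.1 hν
        exact ⟨⟨i, h⟩, rfl⟩⟩

noncomputable def removableRowsEquiv (μ : YoungDiagram) :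
    {i // μ.IsRemovableRow i} ≃ {ρ // AddCell ρ μ} :=
  Equiv.ofBijective (fun i => ⟨μ.removeCorner i.1 i.2, μ.addCell_removeCorner i.2⟩)
    ⟨fun ⟨_, h⟩ ⟨_, h'⟩ he =>
      Subtype.ext (removeCorner_injective (h := h) (h' := h') (congrArg Subtype.val he)),
      fun ⟨_, hρ⟩ => by
        obtain ⟨i, h, rfl⟩ := addCell_iff_exists_removeCorner.1 hρ
        exact ⟨⟨i, h⟩, rfl⟩⟩

def addableRowsEquivOption (μ : YoungDiagram) :
    {i // μ.IsAddableRow i} ≃ Option {i // μ.IsRemovableRow i} where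
  toFun
    | ⟨0, _⟩ => none
    | ⟨i + 1, h⟩ => some ⟨i, h⟩
  invFun
    | none => ⟨0, trivial⟩
    | some ⟨i, h⟩ => ⟨i + 1, h⟩
  left_inv := by rintro ⟨_ | i, h⟩ <;> rfl
  right_inv := by rintro (_ | ⟨i, h⟩) <;> rfl

instance (μ : YoungDiagram) : Finite {i // μ.IsRemovableRow i} :=
  Set.Finite.subset (Set.finite_lt_nat (μ.colLen 0)) fun _ h =>
    mem_iff_lt_colLen.1 (mem_iff_lt_rowLen.2 (IsRemovableRow.rowLen_pos h))

instance (μ : YoungDiagram) : Finite {i // μ.IsAddableRow i} :=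
  Finite.of_equiv _ (addableRowsEquivOption μ).symm

theorem finite_setOf_addCell_left (μ : YoungDiagram) : {ν | AddCell μ ν}.Finite :=
  Set.finite_coe_iff.1 (Finite.of_equiv _ (addableRowsEquiv μ))

theorem finite_setOf_addCell_right (μ : YoungDiagram) : {ρ | AddCell ρ μ}.Finite :=
  Set.finite_coe_iff.1 (Finite.of_equiv _ (removableRowsEquiv μ))

noncomputable def covers (μ : YoungDiagram) : Finset YoungDiagram :=
  (finite_setOf_addCell_left μ).toFinset

noncomputable def cocovers (μ : YoungDiagram) : Finset YoungDiagram :=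
  (finite_setOf_addCell_right μ).toFinset

@[simp]
theorem mem_covers {μ ν : YoungDiagram} : ν ∈ covers μ ↔ AddCell μ ν :=
  Set.Finite.mem_toFinset _

@[simp]
theorem mem_cocovers {μ ρ : YoungDiagram} : ρ ∈ cocovers μ ↔ AddCell ρ μ :=
  Set.Finite.mem_toFinset _

theorem card_covers (μ : YoungDiagram) : (covers μ).card = (cocovers μ).card + 1 := by
  rw [covers, cocovers, ← Set.ncard_eq_toFinset_card _ (finite_setOf_addCell_left μ),
    ← Set.ncard_eq_toFinset_card _ (finite_setOf_addCell_right μ),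
    ← Nat.card_coe_set_eq, ← Nat.card_coe_set_eq, Set.coe_ofPred, Set.coe_ofPred,
    ← Nat.card_congr (addableRowsEquiv μ), ← Nat.card_congr (removableRowsEquiv μ),
    Nat.card_congr (addableRowsEquivOption μ), Finite.card_option]

theorem eq_of_le_of_card_le {μ ν : YoungDiagram} (h : μ ≤ ν) (hc : ν.card ≤ μ.card) : μ = ν :=
  YoungDiagram.ext (Finset.eq_of_subset_of_card_le (cells_subset_iff.2 h) hc)

theorem card_sup_add_card_inf (μ ν : YoungDiagram) :
    (μ ⊔ ν).card + (μ ⊓ ν).card = μ.card + ν.card := by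
  simp only [YoungDiagram.card, cells_sup, cells_inf, Finset.card_union_add_card_inter]

theorem card_lt_card_sup {μ ν : YoungDiagram} (hne : μ ≠ ν) (hc : μ.card = ν.card) :
    μ.card < (μ ⊔ ν).card := by
  refine lt_of_le_of_ne (Finset.card_le_card (cells_subset_iff.2 le_sup_left)) fun he => hne ?_
  have hsup := eq_of_le_of_card_le le_sup_left he.ge
  exact (eq_of_le_of_card_le (hsup ▸ le_sup_right) hc.le).symm

theorem sup_eq_of_addCell {ν ν' l : YoungDiagram} (h : AddCell ν l) (h' : AddCell ν' l)
    (hne : ν ≠ ν') : ν ⊔ ν' = l := by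
  have := card_lt_card_sup hne (by have := h.2; have := h'.2; omega)
  exact eq_of_le_of_card_le (sup_le h.1 h'.1) (by have := h.2; omega)

theorem addCell_inf_left {ν ν' l : YoungDiagram} (h : AddCell ν l) (h' : AddCell ν' l)
    (hne : ν ≠ ν') : AddCell (ν ⊓ ν') ν := by
  have := card_sup_add_card_inf ν ν'
  rw [sup_eq_of_addCell h h' hne] at this
  exact ⟨inf_le_left, by have := h.2; have := h'.2; omega⟩

theorem inf_eq_of_addCell {ν ν' ρ : YoungDiagram} (h : AddCell ρ ν) (h' : AddCell ρ ν')
    (hne : ν ≠ ν') : ν ⊓ ν' = ρ := by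
  have := card_lt_card_sup hne (by have := h.2; have := h'.2; omega)
  have := card_sup_add_card_inf ν ν'
  exact (eq_of_le_of_card_le (le_inf h.1 h'.1) (by have := h.2; have := h'.2; omega)).symm

theorem addCell_sup_left {ν ν' ρ : YoungDiagram} (h : AddCell ρ ν) (h' : AddCell ρ ν')
    (hne : ν ≠ ν') : AddCell ν (ν ⊔ ν') := by
  have := card_sup_add_card_inf ν ν'
  rw [inf_eq_of_addCell h h' hne] at this
  exact ⟨le_sup_left, by have := h.2; have := h'.2; omega⟩

instance : DecidableEq YoungDiagram :=
  fun _ _ => decidable_of_iff _ YoungDiagram.ext_iff.symm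

/-- Two distinct diagrams of the same size have a common cover iff they have a common cocover,
namely their join and their meet. -/
theorem sum_covers_sum_erase_cocovers {M : Type*} [AddCommMonoid M] (ν : YoungDiagram)
    (F : YoungDiagram → M) :
    ∑ l ∈ covers ν, ∑ ν' ∈ (cocovers l).erase ν, F ν' =
      ∑ ρ ∈ cocovers ν, ∑ ν' ∈ (covers ρ).erase ν, F ν' := by
  rw [Finset.sum_sigma', Finset.sum_sigma']
  refine Finset.sum_nbij' (fun x => ⟨ν ⊓ x.2, x.2⟩) (fun x => ⟨ν ⊔ x.2, x.2⟩) ?_ ?_ ?_ ?_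
    (fun _ _ => rfl)
  · rintro ⟨l, ν'⟩ hx
    simp only [Finset.mem_sigma, mem_covers, Finset.mem_erase, mem_cocovers] at hx ⊢
    obtain ⟨hl, hne, hν'⟩ := hx
    exact ⟨addCell_inf_left hl hν' hne.symm, hne,
      inf_comm ν ν' ▸ addCell_inf_left hν' hl hne⟩
  · rintro ⟨ρ, ν'⟩ hx
    simp only [Finset.mem_sigma, mem_covers, Finset.mem_erase, mem_cocovers] at hx ⊢
    obtain ⟨hρ, hne, hν'⟩ := hx
    exact ⟨addCell_sup_left hρ hν' hne.symm, hne,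
      sup_comm ν ν' ▸ addCell_sup_left hν' hρ hne⟩
  · rintro ⟨l, ν'⟩ hx
    simp only [Finset.mem_sigma, mem_covers, Finset.mem_erase, mem_cocovers] at hx
    obtain ⟨hl, hne, hν'⟩ := hx
    simp only [sup_eq_of_addCell hl hν' hne.symm]
  · rintro ⟨ρ, ν'⟩ hx
    simp only [Finset.mem_sigma, mem_covers, Finset.mem_erase, mem_cocovers] at hx
    obtain ⟨hρ, hne, hν'⟩ := hx
    simp only [inf_eq_of_addCell hρ hν' hne.symm]

end YoungDiagram

theorem Set.ncard_biUnion_image {ι α β : Type*} {t : Finset ι} {T : ι → Set β}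
    {e : ι → β → α} (φ : α → ι) (hT : ∀ i ∈ t, (T i).Finite)
    (he : ∀ i ∈ t, Set.InjOn (e i) (T i)) (hφ : ∀ i ∈ t, ∀ x ∈ T i, φ (e i x) = i) :
    (⋃ i ∈ t, e i '' T i).ncard = ∑ i ∈ t, (T i).ncard := by
  have hdisj : (t : Set ι).PairwiseDisjoint fun i => e i '' T i := by
    rintro i hi j hj hij
    refine Set.disjoint_left.2 ?_
    rintro _ ⟨x, hx, rfl⟩ ⟨y, hy, hxy⟩
    exact hij ((hφ i hi x hx).symm.trans (hxy ▸ hφ j hj y hy))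
  have := t.finite_toSet.ncard_biUnion (fun i hi => (hT i hi).image (e i)) hdisj
  simp only [Finset.mem_coe] at this
  rw [this, finsum_mem_finset_eq_sum]
  exact Finset.sum_congr rfl fun i hi => (he i hi).ncard_image

def extendAfter {α : Type*} (m : ℕ) (f : ℕ → α) (x : α) : ℕ → α :=
  fun j => if j ≤ m then f j else x

theorem sytChains_eq_biUnion {lam : YoungDiagram} {m : ℕ} (h : lam.card = m + 1) :
    sytChains lam = ⋃ ν ∈ cocovers lam, (extendAfter m · lam) '' sytChains ν := by
  ext g
  simp only [Set.mem_iUnion, Set.mem_image, mem_cocovers, exists_prop]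
  constructor
  · rintro ⟨h0, hconst, hstep⟩
    have hν : AddCell (g m) lam := hconst (m + 1) h.le ▸ hstep m (by omega)
    refine ⟨g m, hν, extendAfter m g (g m), ⟨?_, fun j hj => ?_, fun i hi => ?_⟩, ?_⟩
    · simpa [extendAfter] using h0
    · have : m ≤ j := by have := hν.2; omega
      rcases this.eq_or_lt with rfl | hlt
      · simp [extendAfter]
      · simp [extendAfter, hlt.not_ge]
    · have : i < m := by have := hν.2; omega
      simpa [extendAfter, this.le, Nat.succ_le_of_lt this] using hstep i (by omega)
    · funext j
      by_cases hjm : j ≤ m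
      · simp [extendAfter, hjm]
      · simp [extendAfter, hjm, hconst j (by omega)]
  · rintro ⟨ν, hν, g, ⟨h0, hconst, hstep⟩, rfl⟩
    have hm : ν.card = m := by have := hν.2; omega
    refine ⟨by simpa [extendAfter] using h0, fun j hj => ?_, fun i hi => ?_⟩
    · simp [extendAfter, show ¬ j ≤ m by omega]
    · rcases Nat.lt_or_ge i m with hi | hi
      · simpa [extendAfter, hi.le, Nat.succ_le_of_lt hi] using hstep i (by omega)
      · have := hconst m hm.le
        simp [extendAfter, show i = m by omega, this, hν]

theorem extendAfter_injOn_sytChains (ν lam : YoungDiagram) :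
    Set.InjOn (extendAfter ν.card · lam) (sytChains ν) := by
  intro g hg g' hg' he
  funext j
  by_cases hj : j ≤ ν.card
  · simpa [extendAfter, hj] using congrFun he j
  · rw [hg.2.1 j (by omega), hg'.2.1 j (by omega)]

theorem finite_sytChains (lam : YoungDiagram) : (sytChains lam).Finite := by
  induction h : lam.card using Nat.strong_induction_on generalizing lam with
  | _ m ih =>
  cases m with
  | zero =>
    exact (Set.finite_singleton fun _ => lam).subset fun g hg =>
      funext fun j => hg.2.1 j (by omega)
  | succ m =>
    rw [sytChains_eq_biUnion h]
    exact (cocovers lam).finite_toSet.biUnion fun ν hν =>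
      (ih _ (by have := (mem_cocovers.1 hν).2; omega) ν rfl).image _

theorem fSYT_eq_sum_cocovers {lam : YoungDiagram} (h : 0 < lam.card) :
    fSYT lam = ∑ ν ∈ cocovers lam, fSYT ν := by
  obtain ⟨m, hm⟩ := Nat.exists_eq_add_one_of_ne_zero h.ne'
  rw [fSYT, sytChains_eq_biUnion hm]
  refine Set.ncard_biUnion_image (fun g => g m) (fun ν _ => finite_sytChains ν)
    (fun ν hν => ?_) (fun ν hν g hg => ?_)
  · have : ν.card = m := by have := (mem_cocovers.1 hν).2; omega
    exact this ▸ extendAfter_injOn_sytChains ν lam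
  · have : ν.card = m := by have := (mem_cocovers.1 hν).2; omega
    simpa [extendAfter] using hg.2.1 m this.le

/-- The branching rule in a form that also holds for `μ = ⊥`, which has no cocovers. -/
theorem card_mul_sum_cocovers_fSYT (μ : YoungDiagram) :
    μ.card * ∑ ρ ∈ cocovers μ, fSYT ρ = μ.card * fSYT μ := by
  rcases Nat.eq_zero_or_pos μ.card with h | h
  · simp [h]
  · rw [← fSYT_eq_sum_cocovers h]

/-- The identity `DU - UD = I` in Young's lattice, evaluated on `f`. -/
theorem sum_covers_fSYT (ν : YoungDiagram) :
    ∑ l ∈ covers ν, fSYT l = (ν.card + 1) * fSYT ν := by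
  induction h : ν.card using Nat.strong_induction_on generalizing ν with
  | _ m ih =>
  have hcovers : ∑ l ∈ covers ν, fSYT l = (covers ν).card * fSYT ν +
      ∑ l ∈ covers ν, ∑ ν' ∈ (cocovers l).erase ν, fSYT ν' := by
    rw [Finset.card_eq_sum_ones, Finset.sum_mul, one_mul, ← Finset.sum_add_distrib]
    refine Finset.sum_congr rfl fun l hl => ?_
    have hl := mem_covers.1 hl
    rw [fSYT_eq_sum_cocovers (by rw [hl.2]; omega),
      Finset.add_sum_erase _ _ (mem_cocovers.2 hl)]
  have hcocovers : ∑ ρ ∈ cocovers ν, ∑ ν' ∈ (covers ρ).erase ν, fSYT ν' +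
      (cocovers ν).card * fSYT ν = m * fSYT ν := by
    rw [← h, ← card_mul_sum_cocovers_fSYT, Finset.card_eq_sum_ones, Finset.sum_mul, one_mul,
      ← Finset.sum_add_distrib, Finset.mul_sum]
    refine Finset.sum_congr rfl fun ρ hρ => ?_
    have hρ := mem_cocovers.1 hρ
    rw [Finset.sum_erase_add _ _ (mem_covers.2 hρ), ih ρ.card (by have := hρ.2; omega) ρ rfl,
      hρ.2]
  rw [hcovers, sum_covers_sum_erase_cocovers, card_covers]
  linarith

/-- Append the down-up step `f(2k) ⊃ ρ ⊂ μ` to a vacillating tableau `f` of length `k`. -/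
def vacAppend (k : ℕ) (f : ℕ → YoungDiagram) (ρ μ : YoungDiagram) : ℕ → YoungDiagram :=
  extendAfter (2 * k + 1) (extendAfter (2 * k) f ρ) μ

theorem mem_vacTabs_zero {lam μ : YoungDiagram} {f : ℕ → YoungDiagram} :
    f ∈ vacTabs 0 lam μ ↔ lam = μ ∧ f = fun _ => μ := by
  refine ⟨fun ⟨h0, hconst, _⟩ => ⟨h0 ▸ hconst 0 le_rfl, funext fun j => hconst j j.zero_le⟩, ?_⟩
  rintro ⟨rfl, rfl⟩
  exact ⟨rfl, fun _ _ => rfl, fun _ h => absurd h (Nat.not_lt_zero _)⟩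

theorem vacTabs_succ_s11 (k : ℕ) (lam μ : YoungDiagram) :
    vacTabs (k + 1) lam μ =
      ⋃ x ∈ (cocovers μ).sigma covers, (vacAppend k · x.1 μ) '' vacTabs k lam x.2 := by
  ext f
  simp only [Set.mem_iUnion, Set.mem_image, Finset.mem_sigma, mem_cocovers, mem_covers,
    exists_prop, Sigma.exists]
  constructor
  · rintro ⟨h0, hconst, hstep⟩
    obtain ⟨hdown, hup⟩ := hstep k (Nat.lt_succ_self k)
    rw [hconst (2 * k + 2) (by omega)] at hup
    refine ⟨f (2 * k + 1), f (2 * k), ⟨hup, hdown⟩, extendAfter (2 * k) f (f (2 * k)),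
      ⟨by simpa [extendAfter] using h0, fun j hj => ?_, fun i hi => ?_⟩, ?_⟩
    · rcases hj.eq_or_lt with rfl | hlt
      · simp [extendAfter]
      · simp [extendAfter, hlt.not_ge]
    · simpa [extendAfter, show 2 * i + 2 ≤ 2 * k by omega, show 2 * i + 1 ≤ 2 * k by omega,
        show 2 * i ≤ 2 * k by omega] using hstep i (by omega)
    · funext j
      simp only [vacAppend, extendAfter]
      split_ifs <;> first | rfl | (congr 1; omega) | exact (hconst j (by omega)).symm
  · rintro ⟨ρ, l, ⟨hρ, hl⟩, f, ⟨h0, hconst, hstep⟩, rfl⟩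
    refine ⟨by simpa [vacAppend, extendAfter] using h0, fun j hj => ?_, fun i hi => ?_⟩
    · simp [vacAppend, extendAfter, show ¬ j ≤ 2 * k + 1 by omega]
    · rcases Nat.lt_or_ge i k with hi | hi
      · simpa [vacAppend, extendAfter, show 2 * i + 2 ≤ 2 * k by omega,
          show 2 * i + 1 ≤ 2 * k by omega, show 2 * i ≤ 2 * k by omega,
          show 2 * i ≤ 2 * k + 1 by omega] using hstep i hi
      · obtain rfl : i = k := by omega
        simpa [vacAppend, extendAfter, hconst (2 * i) le_rfl] using ⟨hl, hρ⟩

theorem vacAppend_injOn {k : ℕ} {ρ μ l : YoungDiagram} {f f' : ℕ → YoungDiagram}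
    {lam lam' : YoungDiagram} (hf : f ∈ vacTabs k lam l) (hf' : f' ∈ vacTabs k lam' l)
    (he : vacAppend k f ρ μ = vacAppend k f' ρ μ) : f = f' := by
  funext j
  by_cases hj : j ≤ 2 * k
  · simpa [vacAppend, extendAfter, hj, show j ≤ 2 * k + 1 by omega] using congrFun he j
  · rw [hf.2.1 j (by omega), hf'.2.1 j (by omega)]

def tableauPairs (n k : ℕ) (μ : YoungDiagram) :
    Set ((ℕ → YoungDiagram) × (ℕ → YoungDiagram)) :=
  {p | ∃ lam : YoungDiagram, lam.card = n ∧ p.1 ∈ sytChains lam ∧ p.2 ∈ vacTabs k lam μ}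

theorem tableauPairs_zero_subset (n : ℕ) (μ : YoungDiagram) :
    tableauPairs n 0 μ ⊆ sytChains μ ×ˢ {fun _ => μ} := by
  rintro ⟨g, f⟩ ⟨lam, -, hg, hf⟩
  obtain ⟨rfl, rfl⟩ := mem_vacTabs_zero.1 hf
  exact ⟨hg, rfl⟩

theorem tableauPairs_zero {n : ℕ} {μ : YoungDiagram} (hμ : μ.card = n) :
    tableauPairs n 0 μ = (fun g => (g, fun _ => μ)) '' sytChains μ := by
  ext ⟨g, f⟩
  simp only [tableauPairs, mem_vacTabs_zero, Set.mem_image, Set.mem_ofPred_eq, Prod.mk.injEq]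
  constructor
  · rintro ⟨lam, -, hg, rfl, rfl⟩
    exact ⟨g, hg, rfl, rfl⟩
  · rintro ⟨g, hg, rfl, rfl⟩
    exact ⟨μ, hμ, hg, rfl, rfl⟩

theorem tableauPairs_succ (n k : ℕ) (μ : YoungDiagram) :
    tableauPairs n (k + 1) μ =
      ⋃ x ∈ (cocovers μ).sigma covers, (fun p => (p.1, vacAppend k p.2 x.1 μ)) ''
        tableauPairs n k x.2 := by
  ext ⟨g, f⟩
  simp only [tableauPairs, vacTabs_succ_s11, Set.mem_iUnion, Set.mem_image, Set.mem_ofPred_eq,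
    Finset.mem_sigma, exists_prop, Sigma.exists, Prod.mk.injEq, Prod.exists]
  constructor
  · rintro ⟨lam, hlam, hg, ρ, l, hρl, f', hf', rfl⟩
    exact ⟨ρ, l, hρl, g, f', ⟨lam, hlam, hg, hf'⟩, rfl, rfl⟩
  · rintro ⟨ρ, l, hρl, g', f', ⟨lam, hlam, hg, hf'⟩, rfl, rfl⟩
    exact ⟨lam, hlam, hg, ρ, l, hρl, f', hf', rfl⟩

theorem finite_tableauPairs (n k : ℕ) (μ : YoungDiagram) : (tableauPairs n k μ).Finite := by
  induction k generalizing μ with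
  | zero =>
    exact ((finite_sytChains μ).prod (Set.finite_singleton _)).subset
      (tableauPairs_zero_subset n μ)
  | succ k ih =>
    rw [tableauPairs_succ]
    exact ((cocovers μ).sigma covers).finite_toSet.biUnion fun x _ => (ih x.2).image _

theorem ncard_tableauPairs_succ (n k : ℕ) (μ : YoungDiagram) :
    (tableauPairs n (k + 1) μ).ncard =
      ∑ ρ ∈ cocovers μ, ∑ l ∈ covers ρ, (tableauPairs n k l).ncard := by
  rw [tableauPairs_succ, Finset.sum_sigma']
  refine Set.ncard_biUnion_image (fun p => ⟨p.2 (2 * k + 1), p.2 (2 * k)⟩)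
    (fun x _ => finite_tableauPairs n k x.2) (fun x _ => ?_) (fun x _ p hp => ?_)
  · rintro ⟨g, f⟩ ⟨lam, -, -, hf⟩ ⟨g', f'⟩ ⟨lam', -, -, hf'⟩ he
    simp only [Prod.mk.injEq] at he
    exact Prod.ext he.1 (vacAppend_injOn hf hf' he.2)
  · obtain ⟨lam, -, -, hf⟩ := hp
    simp [vacAppend, extendAfter, hf.2.1 (2 * k) le_rfl]

theorem ncard_tableauPairs {n : ℕ} (k : ℕ) {μ : YoungDiagram} (hμ : μ.card = n) :
    (tableauPairs n k μ).ncard = n ^ k * fSYT μ := by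
  induction k generalizing μ with
  | zero =>
    rw [tableauPairs_zero hμ, Set.InjOn.ncard_image, pow_zero, one_mul, fSYT]
    exact fun g _ g' _ he => congrArg Prod.fst he
  | succ k ih =>
    calc (tableauPairs n (k + 1) μ).ncard
        = ∑ ρ ∈ cocovers μ, n ^ k * ∑ l ∈ covers ρ, fSYT l := by
          rw [ncard_tableauPairs_succ]
          refine Finset.sum_congr rfl fun ρ hρ => ?_
          rw [Finset.mul_sum]
          refine Finset.sum_congr rfl fun l hl => ih ?_
          rw [(mem_covers.1 hl).2, ← (mem_cocovers.1 hρ).2, hμ]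
      _ = n ^ k * (μ.card * ∑ ρ ∈ cocovers μ, fSYT ρ) := by
          rw [Finset.mul_sum, Finset.mul_sum]
          refine Finset.sum_congr rfl fun ρ hρ => ?_
          rw [sum_covers_fSYT, (mem_cocovers.1 hρ).2]
      _ = n ^ (k + 1) * fSYT μ := by
          rw [card_mul_sum_cocovers_fSYT, hμ, pow_succ, mul_assoc]

theorem mem_rowD {n : ℕ} {c : ℕ × ℕ} : c ∈ rowD n ↔ c.1 = 0 ∧ c.2 < n := by
  rw [rowD, mem_ofRowLens]
  constructor
  · rintro ⟨h, h2⟩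
    simp only [List.length_singleton, Nat.lt_one_iff] at h
    simpa [h] using h2
  · rintro ⟨h1, h2⟩
    exact ⟨by simp [h1], by simpa [h1] using h2⟩

theorem card_rowD (n : ℕ) : (rowD n).card = n := by
  have : (rowD n).cells = {0} ×ˢ Finset.range n := by
    ext c
    simp [mem_rowD, Prod.ext_iff, eq_comm, and_comm]
  simp [YoungDiagram.card, this]

theorem rowD_zero : rowD 0 = ⊥ :=
  YoungDiagram.ext (Finset.card_eq_zero.1 (card_rowD 0))

theorem eq_rowD_card_of_le_rowD {n : ℕ} {μ : YoungDiagram} (h : μ ≤ rowD n) :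
    μ = rowD μ.card := by
  have hrow : μ = rowD (μ.rowLen 0) := by
    ext ⟨i, j⟩
    rw [mem_cells, mem_cells, mem_rowD]
    constructor
    · intro hm
      obtain rfl : i = 0 := (mem_rowD.1 (h hm)).1
      exact ⟨rfl, mem_iff_lt_rowLen.1 hm⟩
    · rintro ⟨rfl, hj⟩
      exact mem_iff_lt_rowLen.2 hj
  have hcard : μ.card = μ.rowLen 0 := by
    conv_lhs => rw [hrow]
    exact card_rowD _
  rwa [hcard]

theorem cocovers_rowD_succ (m : ℕ) : cocovers (rowD (m + 1)) = {rowD m} := by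
  ext ρ
  rw [mem_cocovers, Finset.mem_singleton]
  constructor
  · intro hρ
    have hcard : ρ.card = m := by have := hρ.2; rw [card_rowD] at this; omega
    rw [eq_rowD_card_of_le_rowD hρ.1, hcard]
  · rintro rfl
    exact ⟨fun c hc => mem_rowD.2 (by have := mem_rowD.1 hc; omega), by simp [card_rowD]⟩

theorem sytChains_bot : sytChains ⊥ = {fun _ => ⊥} := by
  ext g
  refine ⟨fun hg => funext fun j => hg.2.1 j (Nat.zero_le _), ?_⟩
  rintro rfl
  exact ⟨rfl, fun _ _ => rfl, fun _ h => absurd h (by simp [YoungDiagram.card])⟩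

theorem fSYT_rowD (n : ℕ) : fSYT (rowD n) = 1 := by
  induction n with
  | zero => rw [rowD_zero, fSYT, sytChains_bot, Set.ncard_singleton]
  | succ m ih =>
    rw [fSYT_eq_sum_cocovers (by rw [card_rowD]; omega), cocovers_rowD_succ,
      Finset.sum_singleton, ih]

theorem stmt11_general (n k : ℕ) :
    {p : (ℕ → YoungDiagram) × (ℕ → YoungDiagram) |
        ∃ lam : YoungDiagram, lam.card = n ∧
          p.1 ∈ sytChains lam ∧ p.2 ∈ vacTabs k lam (rowD n)}.ncard =
      Nat.card (Fin k → Fin n) := by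
  change (tableauPairs n k (rowD n)).ncard = _
  rw [ncard_tableauPairs k (card_rowD n), fSYT_rowD, mul_one, Nat.card_fun, Nat.card_fin,
    Nat.card_fin]

theorem stmt11 (n k : ℕ) (hn : 1 ≤ n) :
    {p : (ℕ → YoungDiagram) × (ℕ → YoungDiagram) |
        ∃ lam : YoungDiagram, lam.card = n ∧
          p.1 ∈ sytChains lam ∧ p.2 ∈ vacTabs k lam (rowD n)}.ncard =
      Nat.card (Fin k → Fin n) :=
  stmt11_general n k
end

section
/- For every nonnegative integer k and positive integer n, the number of sequences (i₁,…,i_k) ∈ {1,…,n}^k equals the number of ways to place k crosses, one in each of k rows of lengths n, n+1, …, n+k−1 respectively (row j having length n+j−1), with at most one cross per column, where columns are aligned on the left. -/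
open YoungDiagram

/-! Fill the rows in order. When the crosses of rows `1, …, j - 1` are placed, they occupy
`j - 1` distinct columns, all inside row `j` because the rows are nested; so row `j`, of
length `n + j - 1`, leaves exactly `n` free columns for its cross, and the count is `n ^ k`. -/

open Finset

variable {α : Type*} [DecidableEq α]

def injectivePiFinset (s : ℕ → Finset α) (k : ℕ) : Finset (Fin k → α) :=
  {c ∈ Fintype.piFinset fun j : Fin k ↦ s j | Function.Injective c}

lemma snoc_mem_injectivePiFinset_iff {s : ℕ → Finset α} {k : ℕ} {c : Fin k → α} {x : α} :
    Fin.snoc c x ∈ injectivePiFinset s (k + 1) ↔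
      c ∈ injectivePiFinset s k ∧ x ∈ s k \ univ.image c := by
  simp only [injectivePiFinset, mem_filter, Fin.mem_piFinset_iff_last_init, Fin.init_snoc,
    Fin.snoc_last, Fin.snoc_injective_iff, mem_sdiff, mem_image, mem_univ, true_and,
    Set.mem_range, Fin.val_last]
  tauto

lemma card_injectivePiFinset_succ (s : ℕ → Finset α) (k : ℕ) :
    #(injectivePiFinset s (k + 1)) = ∑ c ∈ injectivePiFinset s k, #(s k \ univ.image c) := by
  rw [← card_sigma]
  refine card_nbij' (fun c ↦ ⟨Fin.init c, c (Fin.last k)⟩) (fun p ↦ Fin.snoc p.1 p.2)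
    ?_ ?_ ?_ ?_
  · intro c hc
    rw [mem_coe, ← Fin.snoc_init_self c, snoc_mem_injectivePiFinset_iff] at hc
    simpa using hc
  · rintro ⟨c, x⟩ h
    simpa [snoc_mem_injectivePiFinset_iff] using h
  · intro c _
    simp
  · rintro ⟨c, x⟩ _
    simp

lemma image_subset_of_mem_injectivePiFinset {s : ℕ → Finset α} (hs : Monotone s) {k : ℕ}
    {c : Fin k → α} (hc : c ∈ injectivePiFinset s k) : univ.image c ⊆ s k := by
  simp only [injectivePiFinset, mem_filter, Fintype.mem_piFinset] at hc
  simp only [image_subset_iff, mem_univ, forall_const]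
  exact fun j ↦ hs j.is_le' (hc.1 j)

/-- The truncated subtraction is harmless: if `#(s j) ≤ j`, there is no injective choice at all. -/
theorem card_injectivePiFinset {s : ℕ → Finset α} (hs : Monotone s) (k : ℕ) :
    #(injectivePiFinset s k) = ∏ j : Fin k, (#(s j) - j) := by
  induction k with
  | zero => rfl
  | succ k ih =>
    have hfiber : ∀ c ∈ injectivePiFinset s k, #(s k \ univ.image c) = #(s k) - k := by
      intro c hc
      rw [card_sdiff_of_subset (image_subset_of_mem_injectivePiFinset hs hc),
        card_image_of_injective _ (mem_filter.1 hc).2, card_univ, Fintype.card_fin]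
    rw [card_injectivePiFinset_succ, sum_congr rfl hfiber, sum_const, ih, smul_eq_mul,
      Fin.prod_univ_castSucc]
    simp

theorem stmt14_general (k n : ℕ) :
    Nat.card (Fin k → Fin n) =
      {c : Fin k → ℕ | Function.Injective c ∧
        ∀ j : Fin k, 1 ≤ c j ∧ c j ≤ n + (j : ℕ)}.ncard := by
  have hset : {c : Fin k → ℕ | Function.Injective c ∧ ∀ j : Fin k, 1 ≤ c j ∧ c j ≤ n + (j : ℕ)}
      = injectivePiFinset (fun j ↦ Icc 1 (n + j)) k := by
    ext c
    simp [injectivePiFinset, and_comm]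
  have hmono : Monotone fun j ↦ Icc 1 (n + j) := fun i j hij ↦ Icc_subset_Icc_right (by omega)
  rw [hset, Set.ncard_coe_finset, card_injectivePiFinset hmono]
  simp

theorem stmt14 (k n : ℕ) (hn : 1 ≤ n) :
    Nat.card (Fin k → Fin n) =
      {c : Fin k → ℕ | Function.Injective c ∧
        ∀ j : Fin k, 1 ≤ c j ∧ c j ≤ n + (j : ℕ)}.ncard :=
  stmt14_general k n
end
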